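/- arXiv:2205.01324 — 3 statements merged into one kernel-verified Lean document; each statement's English description precedes it below -/
import Mathlib

section
/- Let k : ℝ^d → ℝ be a measurable function with 0 ≤ k(w) ≤ M for all w ∈ ℝ^d, and let g be its Gaussian smoothing with parameter σ > 0. Then the gradient of g is uniformly bounded: for every μ ∈ ℝ^d, ‖∇g(μ)‖² ≤ d·M²/σ². -/
/-!
Differentiating under the integral sign, `∇g(μ) = σ⁻² ∫ (w - μ) φ(w - μ) k(w) dw` where `φ` is the
density of `N(0, σ²I)`, so `‖∇g(μ)‖ ≤ M σ⁻² E‖v‖` for `v ∼ N(0, σ²I)`. By Cauchy–Schwarz,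
`(E‖v‖)² ≤ E‖v‖² = dσ²`; the second moment comes from differentiating the Gaussian integral
`∫ exp(-b‖v‖²) dv = (π / b)^(d/2)` with respect to `b`.
-/

open MeasureTheory Real

/-- The Gaussian smoothing of `k : ℝ^d → ℝ` with parameter `σ`:
`g(μ) = ∫ (2πσ²)^(−d/2) · exp(−‖w − μ‖²/(2σ²)) · k(w) dw = E_{w ∼ N(μ, σ²I)}[k(w)]`. -/
noncomputable def gaussSmooth (d : ℕ) (σ : ℝ) (k : EuclideanSpace ℝ (Fin d) → ℝ) :
    EuclideanSpace ℝ (Fin d) → ℝ :=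
  fun μ => ∫ w, (2 * π * σ ^ 2) ^ (-(d : ℝ) / 2) * Real.exp (-‖w - μ‖ ^ 2 / (2 * σ ^ 2)) * k w

open Module

section GaussianMoments

variable {V : Type*} [NormedAddCommGroup V] [InnerProductSpace ℝ V] [FiniteDimensional ℝ V]
  [MeasurableSpace V] [BorelSpace V] {b : ℝ}

theorem integrable_exp_neg_mul_sq_norm (hb : 0 < b) :
    Integrable (fun v : V => rexp (-b * ‖v‖ ^ 2)) := by
  refine (GaussianFourier.integrable_cexp_neg_mul_sq_norm_add (V := V) (b := (b : ℂ))
    (by simpa using hb) 0 0).norm.congr (.of_forall fun v => ?_)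
  simp [Complex.norm_exp, ← Complex.ofReal_pow]

theorem integrable_sq_norm_mul_exp_neg_mul_sq_norm (hb : 0 < b) :
    Integrable (fun v : V => ‖v‖ ^ 2 * rexp (-b * ‖v‖ ^ 2)) := by
  refine ((integrable_exp_neg_mul_sq_norm (half_pos hb)).const_mul (2 / b)).mono'
    (by fun_prop) (.of_forall fun v => ?_)
  have hx := Real.add_one_le_exp (b / 2 * ‖v‖ ^ 2)
  rw [Real.norm_of_nonneg (by positivity)]
  calc ‖v‖ ^ 2 * rexp (-b * ‖v‖ ^ 2)
      ≤ 2 / b * rexp (b / 2 * ‖v‖ ^ 2) * rexp (-b * ‖v‖ ^ 2) := by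
        gcongr
        rw [div_mul_eq_mul_div, le_div_iff₀ hb]
        nlinarith [sq_nonneg ‖v‖]
    _ = 2 / b * rexp (-(b / 2) * ‖v‖ ^ 2) := by
        rw [mul_assoc, ← Real.exp_add]
        ring_nf

theorem integrable_norm_mul_exp_neg_mul_sq_norm (hb : 0 < b) :
    Integrable (fun v : V => ‖v‖ * rexp (-b * ‖v‖ ^ 2)) := by
  refine ((integrable_exp_neg_mul_sq_norm hb).add
    (integrable_sq_norm_mul_exp_neg_mul_sq_norm hb)).mono' (by fun_prop) (.of_forall fun v => ?_)
  rw [Real.norm_of_nonneg (by positivity), Pi.add_apply]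
  nlinarith [sq_nonneg (‖v‖ - 1), Real.exp_pos (-b * ‖v‖ ^ 2)]

theorem integral_sq_norm_mul_exp_neg_mul_sq_norm (hb : 0 < b) :
    ∫ v : V, ‖v‖ ^ 2 * rexp (-b * ‖v‖ ^ 2) =
      finrank ℝ V / 2 * (π / b) ^ (finrank ℝ V / 2 : ℝ) / b := by
  set r : ℝ := finrank ℝ V / 2
  have hball : Metric.ball b (b / 2) ∈ nhds b := Metric.ball_mem_nhds b (half_pos hb)
  have hbound : ∀ v : V, ∀ c ∈ Metric.ball b (b / 2),
      ‖-(‖v‖ ^ 2 * rexp (-c * ‖v‖ ^ 2))‖ ≤ ‖v‖ ^ 2 * rexp (-(b / 2) * ‖v‖ ^ 2) := by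
    intro v c hc
    have hcb : b / 2 < c := by
      linarith [(abs_lt.mp (Real.dist_eq c b ▸ Metric.mem_ball.mp hc)).1]
    rw [norm_neg, Real.norm_of_nonneg (by positivity)]
    gcongr
  have hderiv : ∀ v : V, ∀ c ∈ Metric.ball b (b / 2),
      HasDerivAt (fun c => rexp (-c * ‖v‖ ^ 2)) (-(‖v‖ ^ 2 * rexp (-c * ‖v‖ ^ 2))) c := by
    intro v c _
    convert ((hasDerivAt_neg c).mul_const (‖v‖ ^ 2)).exp using 1
    ring
  have hintegral := (hasDerivAt_integral_of_dominated_loc_of_deriv_le hball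
    (.of_forall fun c => by fun_prop) (integrable_exp_neg_mul_sq_norm hb) (by fun_prop)
    (.of_forall hbound) (integrable_sq_norm_mul_exp_neg_mul_sq_norm (half_pos hb))
    (.of_forall hderiv)).2
  have hclosed := ((hasDerivAt_inv hb.ne').const_mul π).rpow_const (p := r)
    (Or.inl (by positivity))
  simp only [← div_eq_mul_inv] at hclosed
  have heq : (fun c => ∫ v : V, rexp (-c * ‖v‖ ^ 2)) =ᶠ[nhds b] fun c => (π / c) ^ r := by
    filter_upwards [Ioi_mem_nhds hb] with c hc
    exact GaussianFourier.integral_rexp_neg_mul_sq_norm hc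
  have hderiv_eq := (hintegral.congr_of_eventuallyEq heq.symm).unique hclosed
  rw [integral_neg, rpow_sub_one (by positivity)] at hderiv_eq
  rw [neg_eq_iff_eq_neg.mp hderiv_eq]
  field_simp

end GaussianMoments

theorem sq_integral_mul_le_integral_sq_mul {α : Type*} [MeasurableSpace α] {μ : Measure α}
    {f p : α → ℝ} (hp : 0 ≤ p) (hp_int : Integrable p μ) (hp_one : ∫ a, p a ∂μ = 1)
    (hfp : Integrable (fun a => f a * p a) μ) (hf2p : Integrable (fun a => f a ^ 2 * p a) μ) :
    (∫ a, f a * p a ∂μ) ^ 2 ≤ ∫ a, f a ^ 2 * p a ∂μ := by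
  set X := ∫ a, f a * p a ∂μ
  -- integrate `2 X f ≤ f² + X²` against the probability weight `p`
  have h := integral_mono (hfp.const_mul (2 * X)) (hf2p.add (hp_int.const_mul (X ^ 2)))
    fun a => show 2 * X * (f a * p a) ≤ f a ^ 2 * p a + X ^ 2 * p a by
      nlinarith [mul_nonneg (sq_nonneg (f a - X)) (hp a)]
  rw [integral_const_mul, integral_add' hf2p (hp_int.const_mul _), integral_const_mul,
    hp_one] at h
  nlinarith

section IsotropicGaussian

variable {V : Type*} [NormedAddCommGroup V] [InnerProductSpace ℝ V] {σ : ℝ}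

variable (σ) in
noncomputable def isotropicGaussianPDF (v : V) : ℝ :=
  (2 * π * σ ^ 2) ^ (-(finrank ℝ V : ℝ) / 2) * rexp (-‖v‖ ^ 2 / (2 * σ ^ 2))

theorem isotropicGaussianPDF_eq_mul_exp (v : V) :
    isotropicGaussianPDF σ v =
      (2 * π * σ ^ 2) ^ (-(finrank ℝ V : ℝ) / 2) * rexp (-(2 * σ ^ 2)⁻¹ * ‖v‖ ^ 2) := by
  rw [isotropicGaussianPDF]
  ring_nf

theorem isotropicGaussianPDF_nonneg (v : V) : 0 ≤ isotropicGaussianPDF σ v := by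
  unfold isotropicGaussianPDF
  positivity

variable [FiniteDimensional ℝ V] [MeasurableSpace V] [BorelSpace V]

theorem integrable_isotropicGaussianPDF (hσ : σ ≠ 0) :
    Integrable (isotropicGaussianPDF σ : V → ℝ) := by
  simp_rw [funext isotropicGaussianPDF_eq_mul_exp]
  exact (integrable_exp_neg_mul_sq_norm (by positivity)).const_mul _

theorem integrable_norm_mul_isotropicGaussianPDF (hσ : σ ≠ 0) :
    Integrable (fun v : V => ‖v‖ * isotropicGaussianPDF σ v) := by
  simp_rw [isotropicGaussianPDF_eq_mul_exp, mul_left_comm ‖_‖]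
  exact (integrable_norm_mul_exp_neg_mul_sq_norm (by positivity)).const_mul _

theorem integrable_sq_norm_mul_isotropicGaussianPDF (hσ : σ ≠ 0) :
    Integrable (fun v : V => ‖v‖ ^ 2 * isotropicGaussianPDF σ v) := by
  simp_rw [isotropicGaussianPDF_eq_mul_exp, mul_left_comm (‖_‖ ^ 2)]
  exact (integrable_sq_norm_mul_exp_neg_mul_sq_norm (by positivity)).const_mul _

theorem integral_isotropicGaussianPDF (hσ : σ ≠ 0) : ∫ v : V, isotropicGaussianPDF σ v = 1 := by
  simp_rw [isotropicGaussianPDF_eq_mul_exp]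
  rw [integral_const_mul, GaussianFourier.integral_rexp_neg_mul_sq_norm (by positivity),
    show π / (2 * σ ^ 2)⁻¹ = 2 * π * σ ^ 2 by rw [div_inv_eq_mul]; ring, neg_div,
    rpow_neg (by positivity), inv_mul_cancel₀ (by positivity)]

theorem integral_sq_norm_mul_isotropicGaussianPDF (hσ : σ ≠ 0) :
    ∫ v : V, ‖v‖ ^ 2 * isotropicGaussianPDF σ v = finrank ℝ V * σ ^ 2 := by
  simp_rw [isotropicGaussianPDF_eq_mul_exp, mul_left_comm (‖_‖ ^ 2)]
  rw [integral_const_mul, integral_sq_norm_mul_exp_neg_mul_sq_norm (by positivity)]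
  rw [show π / (2 * σ ^ 2)⁻¹ = 2 * π * σ ^ 2 by rw [div_inv_eq_mul]; ring, neg_div,
    rpow_neg (by positivity)]
  have : (2 * π * σ ^ 2) ^ (finrank ℝ V / 2 : ℝ) ≠ 0 := by positivity
  field_simp

theorem sq_integral_norm_mul_isotropicGaussianPDF_le (hσ : σ ≠ 0) :
    (∫ v : V, ‖v‖ * isotropicGaussianPDF σ v) ^ 2 ≤ finrank ℝ V * σ ^ 2 :=
  integral_sq_norm_mul_isotropicGaussianPDF (V := V) hσ ▸
    sq_integral_mul_le_integral_sq_mul isotropicGaussianPDF_nonneg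
      (integrable_isotropicGaussianPDF hσ) (integral_isotropicGaussianPDF hσ)
      (integrable_norm_mul_isotropicGaussianPDF hσ) (integrable_sq_norm_mul_isotropicGaussianPDF hσ)

end IsotropicGaussian

theorem exp_neg_sq_norm_sub_le {E : Type*} [SeminormedAddCommGroup E] {σ : ℝ} (hσ : 0 < σ)
    {x μ : E} (hxμ : ‖x - μ‖ ≤ σ) (w : E) :
    rexp (-‖w - x‖ ^ 2 / (2 * σ ^ 2)) ≤ rexp (1 / 2) * rexp (-(4 * σ ^ 2)⁻¹ * ‖w - μ‖ ^ 2) := by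
  have htri := norm_sub_le_norm_sub_add_norm_sub w x μ
  have hsq : ‖w - μ‖ ^ 2 ≤ 2 * ‖w - x‖ ^ 2 + 2 * σ ^ 2 := by
    nlinarith [norm_nonneg (w - μ), norm_nonneg (x - μ), sq_nonneg (‖w - x‖ - ‖x - μ‖)]
  rw [← Real.exp_add, Real.exp_le_exp]
  field_simp
  nlinarith

section GaussianSmoothing

variable {V : Type*} [NormedAddCommGroup V] [InnerProductSpace ℝ V] {σ : ℝ}

theorem continuous_isotropicGaussianPDF : Continuous (isotropicGaussianPDF σ : V → ℝ) := by
  unfold isotropicGaussianPDF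
  fun_prop

theorem hasFDerivAt_isotropicGaussianPDF_sub (w x : V) :
    HasFDerivAt (fun y => isotropicGaussianPDF σ (w - y))
      ((isotropicGaussianPDF σ (w - x) / σ ^ 2) • innerSL ℝ (w - x)) x := by
  have h := ((((hasFDerivAt_id x).const_sub w).norm_sq.const_mul (-(2 * σ ^ 2)⁻¹)).exp).const_mul
    ((2 * π * σ ^ 2) ^ (-(finrank ℝ V : ℝ) / 2))
  simp only [funext isotropicGaussianPDF_eq_mul_exp]
  refine h.congr_fderiv (ContinuousLinearMap.ext fun h => ?_)
  simp
  ring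

theorem norm_isotropicGaussianPDF_mul_div_smul_innerSL (v : V) (c : ℝ) :
    ‖(isotropicGaussianPDF σ v * c / σ ^ 2) • innerSL ℝ v‖ =
      isotropicGaussianPDF σ v * |c| / σ ^ 2 * ‖v‖ := by
  rw [norm_smul, innerSL_apply_norm, norm_div, norm_mul,
    Real.norm_of_nonneg (isotropicGaussianPDF_nonneg _), Real.norm_eq_abs c, norm_pow,
    Real.norm_eq_abs σ, sq_abs]

theorem norm_isotropicGaussianPDF_sub_mul_div_smul_innerSL_le (hσ : 0 < σ) {c M : ℝ}
    (hcM : |c| ≤ M) {x y : V} (hy : y ∈ Metric.ball x σ) (w : V) :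
    ‖(isotropicGaussianPDF σ (w - y) * c / σ ^ 2) • innerSL ℝ (w - y)‖ ≤
      (2 * π * σ ^ 2) ^ (-(finrank ℝ V : ℝ) / 2) * rexp (1 / 2) * M / σ ^ 2 *
        (‖w - x‖ * rexp (-(4 * σ ^ 2)⁻¹ * ‖w - x‖ ^ 2) +
          σ * rexp (-(4 * σ ^ 2)⁻¹ * ‖w - x‖ ^ 2)) := by
  set C := (2 * π * σ ^ 2) ^ (-(finrank ℝ V : ℝ) / 2)
  have hM : 0 ≤ M := (abs_nonneg c).trans hcM
  have hpdf_le : isotropicGaussianPDF σ (w - y) ≤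
      C * rexp (1 / 2) * rexp (-(4 * σ ^ 2)⁻¹ * ‖w - x‖ ^ 2) := by
    have := mul_le_mul_of_nonneg_left
      (exp_neg_sq_norm_sub_le hσ (mem_ball_iff_norm.mp hy).le w) (by positivity : 0 ≤ C)
    exact this.trans_eq (by ring)
  have hnorm_le : ‖w - y‖ ≤ ‖w - x‖ + σ := by
    linarith [norm_sub_le_norm_sub_add_norm_sub w x y, norm_sub_rev x y, mem_ball_iff_norm.mp hy]
  rw [norm_isotropicGaussianPDF_mul_div_smul_innerSL]
  calc isotropicGaussianPDF σ (w - y) * |c| / σ ^ 2 * ‖w - y‖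
      ≤ C * rexp (1 / 2) * rexp (-(4 * σ ^ 2)⁻¹ * ‖w - x‖ ^ 2) * M / σ ^ 2 * (‖w - x‖ + σ) := by
        gcongr
    _ = _ := by ring

variable [FiniteDimensional ℝ V] [MeasurableSpace V] [BorelSpace V]

variable (σ) in
noncomputable def gaussianSmoothing (k : V → ℝ) (x : V) : ℝ :=
  ∫ w, isotropicGaussianPDF σ (w - x) * k w

theorem hasFDerivAt_gaussianSmoothing (hσ : 0 < σ) {k : V → ℝ} (hk : Measurable k) {M : ℝ}
    (hkM : ∀ w, |k w| ≤ M) (x : V) :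
    HasFDerivAt (gaussianSmoothing σ k)
      (∫ w, (isotropicGaussianPDF σ (w - x) * k w / σ ^ 2) • innerSL ℝ (w - x)) x := by
  have hpdf : ∀ y : V, AEStronglyMeasurable (fun w => isotropicGaussianPDF σ (w - y)) :=
    fun y => (continuous_isotropicGaussianPDF.comp (continuous_sub_right y)).aestronglyMeasurable
  have hmeas : ∀ y : V, AEStronglyMeasurable (fun w => isotropicGaussianPDF σ (w - y) * k w) :=
    fun y => (hpdf y).mul hk.aestronglyMeasurable
  have hint : Integrable (fun w => isotropicGaussianPDF σ (w - x) * k w) :=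
    ((integrable_isotropicGaussianPDF hσ.ne').comp_sub_right x).mul_bdd hk.aestronglyMeasurable
      (.of_forall fun w => hkM w)
  have hmeas' : AEStronglyMeasurable
      (fun w => (isotropicGaussianPDF σ (w - x) * k w / σ ^ 2) • innerSL ℝ (w - x)) := by
    fun_prop
  refine hasFDerivAt_integral_of_dominated_of_fderiv_le (Metric.ball_mem_nhds x hσ)
    (.of_forall hmeas) hint hmeas'
    (.of_forall fun w y hy => norm_isotropicGaussianPDF_sub_mul_div_smul_innerSL_le hσ (hkM w) hy w)
    ((((integrable_norm_mul_exp_neg_mul_sq_norm (by positivity)).add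
      ((integrable_exp_neg_mul_sq_norm (by positivity)).const_mul σ)).comp_sub_right x).const_mul _)
    (.of_forall fun w y _ => ?_)
  refine ((hasFDerivAt_isotropicGaussianPDF_sub w y).mul_const (k w)).congr_fderiv ?_
  rw [smul_smul]
  ring_nf

theorem sq_norm_fderiv_gaussianSmoothing_le (hσ : 0 < σ) {k : V → ℝ} (hk : Measurable k) {M : ℝ}
    (hkM : ∀ w, |k w| ≤ M) (x : V) :
    ‖fderiv ℝ (gaussianSmoothing σ k) x‖ ^ 2 ≤ finrank ℝ V * M ^ 2 / σ ^ 2 := by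
  have hM : 0 ≤ M := (abs_nonneg _).trans (hkM 0)
  have hnorm : ‖fderiv ℝ (gaussianSmoothing σ k) x‖ ≤
      ∫ w, M / σ ^ 2 * (‖w - x‖ * isotropicGaussianPDF σ (w - x)) := by
    rw [(hasFDerivAt_gaussianSmoothing hσ hk hkM x).fderiv]
    refine norm_integral_le_of_norm_le
      (((integrable_norm_mul_isotropicGaussianPDF hσ.ne').comp_sub_right x).const_mul _)
      (.of_forall fun w => ?_)
    rw [norm_isotropicGaussianPDF_mul_div_smul_innerSL]
    calc isotropicGaussianPDF σ (w - x) * |k w| / σ ^ 2 * ‖w - x‖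
        ≤ isotropicGaussianPDF σ (w - x) * M / σ ^ 2 * ‖w - x‖ := by
          gcongr
          · exact isotropicGaussianPDF_nonneg _
          · exact hkM w
      _ = M / σ ^ 2 * (‖w - x‖ * isotropicGaussianPDF σ (w - x)) := by ring
  rw [integral_const_mul, integral_sub_right_eq_self (fun v => ‖v‖ * isotropicGaussianPDF σ v) x]
    at hnorm
  set m := ∫ v : V, ‖v‖ * isotropicGaussianPDF σ v
  calc ‖fderiv ℝ (gaussianSmoothing σ k) x‖ ^ 2 ≤ (M / σ ^ 2 * m) ^ 2 := by gcongr
    _ = M ^ 2 / σ ^ 4 * m ^ 2 := by ring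
    _ ≤ M ^ 2 / σ ^ 4 * (finrank ℝ V * σ ^ 2) := by
        gcongr
        exact sq_integral_norm_mul_isotropicGaussianPDF_le hσ.ne'
    _ = finrank ℝ V * M ^ 2 / σ ^ 2 := by field_simp

end GaussianSmoothing

theorem stmt_7_general (d : ℕ) (σ M : ℝ) (hσ : 0 < σ)
    (k : EuclideanSpace ℝ (Fin d) → ℝ) (hmeas : Measurable k)
    (hk0 : ∀ w, 0 ≤ k w) (hkM : ∀ w, k w ≤ M)
    (g : EuclideanSpace ℝ (Fin d) → ℝ) (hg : g = gaussSmooth d σ k)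
    (μ : EuclideanSpace ℝ (Fin d)) :
    ‖gradient g μ‖ ^ 2 ≤ d * M ^ 2 / σ ^ 2 := by
  have hg' : g = gaussianSmoothing σ k := by
    ext x
    simp [hg, gaussSmooth, gaussianSmoothing, isotropicGaussianPDF]
  rw [hg', gradient, LinearIsometryEquiv.norm_map]
  simpa using sq_norm_fderiv_gaussianSmoothing_le hσ hmeas
    (fun w => abs_le.2 ⟨by linarith [hk0 w, hkM w], hkM w⟩) μ

theorem stmt_7 (d : ℕ) (hd : 1 ≤ d) (σ M : ℝ) (hσ : 0 < σ) (hM : 0 < M)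
    (k : EuclideanSpace ℝ (Fin d) → ℝ) (hmeas : Measurable k)
    (hk0 : ∀ w, 0 ≤ k w) (hkM : ∀ w, k w ≤ M)
    (g : EuclideanSpace ℝ (Fin d) → ℝ) (hg : g = gaussSmooth d σ k)
    (μ : EuclideanSpace ℝ (Fin d)) :
    ‖gradient g μ‖ ^ 2 ≤ d * M ^ 2 / σ ^ 2 :=
  stmt_7_general d σ M hσ k hmeas hk0 hkM g hg μ
end

section
/- Let k : ℝ^d → ℝ be a measurable function with 0 ≤ k(w) ≤ M for all w ∈ ℝ^d, and let g be its Gaussian smoothing with parameter σ > 0. Then g is twice differentiable on ℝ^d and its Hessian admits the log-derivative (score-function) representation ∇²g(μ) = ∫_{ℝ^d} (2π)^{−d/2} exp(−‖w‖²/2) · σ^{−2}(wwᵀ − I) · k(μ + σw) dw. -/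
/-!
`g` is the convolution of the bounded function `k` with the Gaussian density
`φ(x) = c · exp(-b‖x‖²)`, `b = 1/(2σ²)`. The Gaussian and its first two derivatives are bounded by
a polynomial times `exp(-b‖x‖²)`, hence, uniformly over shifts of size `< 1`, by the integrable
function `C · exp(-(b/4)‖x‖²)`. Dominated convergence therefore lets us differentiate twice under
the integral sign: `∇²g(μ) = ∫ k(w) ∇²φ(μ - w) dw`, continuous in `μ`. The substitution
`w = μ + σx` turns `∇²φ(-σx)` into `σ⁻ᵈ` times the standard normal density times
`σ⁻²(xxᵀ - I)`.
-/

open MeasureTheory Real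
open scoped RealInnerProductSpace

open Filter Metric

def IsShiftDominated {V F : Type*} [NormedAddCommGroup V] [Norm F] (G : V → F) (H : V → ℝ) :
    Prop :=
  ∀ x y, ‖y‖ < 1 → ‖G (x + y)‖ ≤ H x

section BoundedConvolution

variable {V F : Type*} [NormedAddCommGroup V] [NormedAddCommGroup F]
  {k : V → ℝ} {M : ℝ} {G : V → F} {H : V → ℝ}

lemma IsShiftDominated.norm_smul_comp_sub_le [NormedSpace ℝ F] (hGH : IsShiftDominated G H)
    (hkM : ∀ w, ‖k w‖ ≤ M) {μ μ₀ : V} (hμ : μ ∈ ball μ₀ 1) (w : V) :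
    ‖k w • G (μ - w)‖ ≤ M * H (μ₀ - w) := by
  have hG : ‖G (μ - w)‖ ≤ H (μ₀ - w) := by
    simpa [sub_add_sub_cancel'] using hGH (μ₀ - w) (μ - μ₀) (mem_ball_iff_norm.1 hμ)
  rw [norm_smul]
  exact mul_le_mul (hkM w) hG (norm_nonneg _) ((norm_nonneg _).trans (hkM w))

variable [MeasurableSpace V] {ν : Measure V}

lemma IsShiftDominated.integrable [OpensMeasurableSpace V] [SecondCountableTopology V]
    (hGH : IsShiftDominated G H) (hG : Continuous G) (hH : Integrable H ν) : Integrable G ν :=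
  hH.mono' hG.aestronglyMeasurable (ae_of_all _ fun x => by simpa using hGH x 0 (by simp))

variable [NormedSpace ℝ F] [MeasurableAdd V] [MeasurableNeg V] [ν.IsAddLeftInvariant]
  [ν.IsNegInvariant]

lemma integrable_smul_comp_sub (hk : AEStronglyMeasurable k ν) (hkM : ∀ w, ‖k w‖ ≤ M)
    (hGint : Integrable G ν) (μ : V) :
    Integrable (fun w => k w • G (μ - w)) ν :=
  (hGint.comp_sub_left μ).bdd_smul M hk (ae_of_all _ hkM)

variable [NormedSpace ℝ V] [FiniteDimensional ℝ V] [BorelSpace V]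

lemma hasFDerivAt_integral_smul_comp_sub (hk : AEStronglyMeasurable k ν)
    (hkM : ∀ w, ‖k w‖ ≤ M) {G' : V → V →L[ℝ] F} (hG : ∀ x, HasFDerivAt G (G' x) x)
    (hG' : Continuous G') (hH : Integrable H ν) (hGH : IsShiftDominated G H)
    (hG'H : IsShiftDominated G' H) (μ₀ : V) :
    HasFDerivAt (fun μ => ∫ w, k w • G (μ - w) ∂ν) (∫ w, k w • G' (μ₀ - w) ∂ν) μ₀ := by
  have hGint : Integrable G ν :=
    hGH.integrable (continuous_iff_continuousAt.2 fun x => (hG x).continuousAt) hH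
  refine hasFDerivAt_integral_of_dominated_of_fderiv_le (ball_mem_nhds μ₀ one_pos)
    (Eventually.of_forall fun μ => (integrable_smul_comp_sub hk hkM hGint μ).1)
    (integrable_smul_comp_sub hk hkM hGint μ₀)
    (integrable_smul_comp_sub hk hkM (hG'H.integrable hG' hH) μ₀).1
    (ae_of_all _ fun w μ hμ => hG'H.norm_smul_comp_sub_le hkM hμ w)
    ((hH.comp_sub_left μ₀).const_mul M) (ae_of_all _ fun w μ _ => ?_)
  exact (((hG (μ - w)).comp μ ((hasFDerivAt_id μ).sub_const w)).const_smul (k w)).congr_fderiv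
    (by ext; simp)

lemma continuous_integral_smul_comp_sub (hk : AEStronglyMeasurable k ν)
    (hkM : ∀ w, ‖k w‖ ≤ M) (hG : Continuous G) (hH : Integrable H ν)
    (hGH : IsShiftDominated G H) :
    Continuous fun μ => ∫ w, k w • G (μ - w) ∂ν :=
  continuous_iff_continuousAt.2 fun μ₀ =>
    continuousAt_of_dominated
      (Eventually.of_forall fun μ => (integrable_smul_comp_sub hk hkM (hGH.integrable hG hH) μ).1)
      (eventually_of_mem (ball_mem_nhds μ₀ one_pos) fun _ hμ =>
        ae_of_all _ fun w => hGH.norm_smul_comp_sub_le hkM hμ w)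
      ((hH.comp_sub_left μ₀).const_mul M)
      (ae_of_all _ fun _ => by fun_prop)

theorem contDiff_two_integral_smul_comp_sub (hk : AEStronglyMeasurable k ν)
    (hkM : ∀ w, ‖k w‖ ≤ M) {G' : V → V →L[ℝ] F} {G'' : V → V →L[ℝ] V →L[ℝ] F}
    (hG : ∀ x, HasFDerivAt G (G' x) x) (hG' : ∀ x, HasFDerivAt G' (G'' x) x)
    (hG'' : Continuous G'') (hH : Integrable H ν) (hGH : IsShiftDominated G H)
    (hG'H : IsShiftDominated G' H) (hG''H : IsShiftDominated G'' H) :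
    ContDiff ℝ 2 (fun μ => ∫ w, k w • G (μ - w) ∂ν) ∧
      ∀ μ u v, iteratedFDeriv ℝ 2 (fun μ => ∫ w, k w • G (μ - w) ∂ν) μ ![u, v] =
        ∫ w, k w • G'' (μ - w) u v ∂ν := by
  have hG'c : Continuous G' := continuous_iff_continuousAt.2 fun x => (hG' x).continuousAt
  have hD1 μ := hasFDerivAt_integral_smul_comp_sub hk hkM hG hG'c hH hGH hG'H μ
  have hD2 μ := hasFDerivAt_integral_smul_comp_sub hk hkM hG' hG'' hH hG'H hG''H μ
  have hfderiv : fderiv ℝ (fun μ => ∫ w, k w • G (μ - w) ∂ν) =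
      fun μ => ∫ w, k w • G' (μ - w) ∂ν := funext fun μ => (hD1 μ).fderiv
  have hfderiv2 : fderiv ℝ (fun μ => ∫ w, k w • G' (μ - w) ∂ν) =
      fun μ => ∫ w, k w • G'' (μ - w) ∂ν := funext fun μ => (hD2 μ).fderiv
  constructor
  · rw [show (2 : WithTop ℕ∞) = 1 + 1 by norm_num, contDiff_succ_iff_fderiv, hfderiv,
      contDiff_one_iff_fderiv, hfderiv2]
    exact ⟨fun μ => (hD1 μ).differentiableAt, by simp, fun μ => (hD2 μ).differentiableAt,
      continuous_integral_smul_comp_sub hk hkM hG'' hH hG''H⟩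
  · intro μ u v
    have hint := integrable_smul_comp_sub hk hkM
      (hG''H.integrable (F := V →L[ℝ] V →L[ℝ] F) hG'' hH) μ
    rw [iteratedFDeriv_two_apply, hfderiv, hfderiv2]
    simp only [Matrix.cons_val_zero, Matrix.cons_val_one]
    rw [ContinuousLinearMap.integral_apply hint,
      ContinuousLinearMap.integral_apply (hint.apply_continuousLinearMap u)]
    rfl

end BoundedConvolution

section GaussianDecay

variable {V : Type*} [NormedAddCommGroup V] {b : ℝ}

lemma one_add_add_sq_le_mul_exp (hb : 0 < b) (p : ℝ) :
    1 + p + p ^ 2 ≤ (2 + 4 / b) * rexp (b / 2 * p ^ 2) := by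
  have hexp := Real.add_one_le_exp (b / 2 * p ^ 2)
  have h4b : 0 < 4 / b := by positivity
  have hp2 : 2 * p ^ 2 = 4 / b * (b / 2 * p ^ 2) := by field_simp; ring
  nlinarith [sq_nonneg (p - 1), sq_nonneg p]

lemma one_add_add_sq_mul_exp_le (hb : 0 < b) {p q : ℝ} (hq : q ≤ p + 1) (hq0 : 0 ≤ q) :
    (1 + p + p ^ 2) * rexp (-(b * p ^ 2)) ≤
      (2 + 4 / b) * rexp (b / 2) * rexp (-(b / 4 * q ^ 2)) := by
  have hq2 : b / 4 * q ^ 2 ≤ b / 2 * p ^ 2 + b / 2 := by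
    nlinarith [pow_le_pow_left₀ hq0 hq 2, sq_nonneg (p - 1)]
  calc (1 + p + p ^ 2) * rexp (-(b * p ^ 2))
      ≤ (2 + 4 / b) * rexp (b / 2 * p ^ 2) * rexp (-(b * p ^ 2)) := by
        gcongr; exact one_add_add_sq_le_mul_exp hb p
    _ = (2 + 4 / b) * rexp (-(b / 2 * p ^ 2)) := by
        rw [mul_assoc, ← Real.exp_add]; ring_nf
    _ ≤ (2 + 4 / b) * rexp (b / 2) * rexp (-(b / 4 * q ^ 2)) := by
        rw [mul_assoc, ← Real.exp_add]; gcongr; linarith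

lemma isShiftDominated_of_norm_le {F : Type*} [NormedAddCommGroup F] {G : V → F} (hb : 0 < b)
    {A : ℝ} (hA : 0 ≤ A) (hG : ∀ z, ‖G z‖ ≤ A * ((1 + ‖z‖ + ‖z‖ ^ 2) * rexp (-(b * ‖z‖ ^ 2)))) :
    IsShiftDominated G fun x => A * ((2 + 4 / b) * rexp (b / 2)) * rexp (-(b / 4 * ‖x‖ ^ 2)) := by
  intro x y hy
  have hxy : ‖x‖ ≤ ‖x + y‖ + 1 := by
    have := norm_sub_le (x + y) y
    rw [add_sub_cancel_right] at this
    linarith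
  beta_reduce
  rw [mul_assoc]
  exact (hG (x + y)).trans
    (mul_le_mul_of_nonneg_left (one_add_add_sq_mul_exp_le hb hxy (norm_nonneg x)) hA)

end GaussianDecay

section Gaussian

variable {V : Type*} [NormedAddCommGroup V] [InnerProductSpace ℝ V] {b : ℝ}

/-- `innerSL ℝ` is typed as conjugate-linear in its first argument; this is the same map typed
as a bilinear map over `ℝ`. -/
noncomputable def realInnerSL (V : Type*) [NormedAddCommGroup V] [InnerProductSpace ℝ V] :
    V →L[ℝ] V →L[ℝ] ℝ :=
  innerSL ℝ

@[simp] lemma realInnerSL_apply (u v : V) : realInnerSL V u v = ⟪u, v⟫ := rfl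

noncomputable def gaussianFDeriv (b : ℝ) (x : V) : V →L[ℝ] ℝ :=
  (-2 * b * rexp (-(b * ‖x‖ ^ 2))) • innerSL ℝ x

noncomputable def gaussianHessian (b : ℝ) (x : V) : V →L[ℝ] V →L[ℝ] ℝ :=
  rexp (-(b * ‖x‖ ^ 2)) •
    ((4 * b ^ 2) • (innerSL ℝ x).smulRight (innerSL ℝ x) - (2 * b) • realInnerSL V)

lemma gaussianHessian_apply (b : ℝ) (x u v : V) :
    gaussianHessian b x u v =
      rexp (-(b * ‖x‖ ^ 2)) * (4 * b ^ 2 * (⟪x, u⟫ * ⟪x, v⟫) - 2 * b * ⟪u, v⟫) := by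
  simp [gaussianHessian]

lemma gaussianHessian_neg (b : ℝ) (x : V) : gaussianHessian b (-x) = gaussianHessian b x := by
  ext u v
  simp [gaussianHessian_apply]

lemma gaussianHessian_smul_apply {σ : ℝ} (hσ : σ ≠ 0) (x u v : V) :
    gaussianHessian (2 * σ ^ 2)⁻¹ (σ • x) u v =
      rexp (-‖x‖ ^ 2 / 2) * ((σ ^ 2)⁻¹ * (⟪u, x⟫ * ⟪x, v⟫ - ⟪u, v⟫)) := by
  rw [gaussianHessian_apply, norm_smul, inner_smul_left, inner_smul_left, real_inner_comm x u]
  simp only [conj_trivial, Real.norm_eq_abs, mul_pow, sq_abs]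
  field_simp
  ring_nf

lemma hasFDerivAt_exp_neg_mul_norm_sq (b : ℝ) (x : V) :
    HasFDerivAt (fun x : V => rexp (-(b * ‖x‖ ^ 2))) (gaussianFDeriv b x) x := by
  refine (((hasFDerivAt_id x).norm_sq.const_mul b).neg.exp).congr_fderiv ?_
  ext y
  simp only [gaussianFDeriv, smul_apply, neg_apply, Pi.neg_apply, ContinuousLinearMap.comp_id,
    coe_innerSL_apply, smul_eq_mul, nsmul_eq_mul, Nat.cast_ofNat, id_eq]
  ring

lemma hasFDerivAt_gaussianFDeriv (b : ℝ) (x : V) :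
    HasFDerivAt (gaussianFDeriv b) (gaussianHessian b x) x := by
  have hscalar := (hasFDerivAt_exp_neg_mul_norm_sq b x).const_mul (-2 * b)
  refine (hscalar.smul (realInnerSL V).hasFDerivAt).congr_fderiv ?_
  ext u v
  simp only [gaussianFDeriv, gaussianHessian, add_apply, sub_apply, smul_apply,
    ContinuousLinearMap.smulRight_apply, coe_innerSL_apply, realInnerSL_apply, smul_eq_mul]
  ring

lemma continuous_gaussianHessian (b : ℝ) : Continuous (gaussianHessian (V := V) b) := by
  have hinner : Continuous fun x : V => innerSL ℝ x := (innerSL ℝ).continuous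
  have houter : Continuous fun x : V => (innerSL ℝ x).smulRight (innerSL ℝ x) :=
    (ContinuousLinearMap.smulRightL ℝ V (V →L[ℝ] ℝ)).continuous₂.comp (hinner.prodMk hinner)
  unfold gaussianHessian
  fun_prop

lemma norm_gaussianFDeriv (hb : 0 ≤ b) (x : V) :
    ‖gaussianFDeriv b x‖ = 2 * b * ‖x‖ * rexp (-(b * ‖x‖ ^ 2)) := by
  rw [gaussianFDeriv, norm_smul, innerSL_apply_norm, Real.norm_eq_abs,
    abs_of_nonpos (by nlinarith [(Real.exp_pos (-(b * ‖x‖ ^ 2))).le])]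
  ring

lemma norm_gaussianHessian_le (hb : 0 ≤ b) (x : V) :
    ‖gaussianHessian b x‖ ≤ (4 * b ^ 2 * ‖x‖ ^ 2 + 2 * b) * rexp (-(b * ‖x‖ ^ 2)) := by
  have houter : ‖(innerSL ℝ x).smulRight (innerSL ℝ x)‖ = ‖x‖ ^ 2 := by
    rw [ContinuousLinearMap.norm_smulRight_apply, innerSL_apply_norm, sq]
  have hinner : ‖realInnerSL V‖ ≤ 1 :=
    ContinuousLinearMap.opNorm_le_bound _ zero_le_one fun u => by
      rw [one_mul]; exact (innerSL_apply_norm ℝ u).le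
  have hsum : ‖(4 * b ^ 2) • (innerSL ℝ x).smulRight (innerSL ℝ x) - (2 * b) • realInnerSL V‖
      ≤ 4 * b ^ 2 * ‖x‖ ^ 2 + 2 * b := by
    refine (norm_sub_le (E := V →L[ℝ] V →L[ℝ] ℝ) _ _).trans (add_le_add ?_ ?_)
    · refine (ContinuousLinearMap.opNorm_smul_le _ _).trans_eq ?_
      rw [houter, Real.norm_of_nonneg (by positivity)]
    · refine (ContinuousLinearMap.opNorm_smul_le _ _).trans ?_
      rw [Real.norm_of_nonneg (by positivity)]
      nlinarith
  calc ‖gaussianHessian b x‖ ≤ ‖rexp (-(b * ‖x‖ ^ 2))‖ *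
        ‖(4 * b ^ 2) • (innerSL ℝ x).smulRight (innerSL ℝ x) - (2 * b) • realInnerSL V‖ :=
        ContinuousLinearMap.opNorm_smul_le _ _
    _ ≤ rexp (-(b * ‖x‖ ^ 2)) * (4 * b ^ 2 * ‖x‖ ^ 2 + 2 * b) := by
        rw [Real.norm_of_nonneg (Real.exp_pos _).le]
        gcongr
    _ = _ := mul_comm _ _

lemma isShiftDominated_gaussian (hb : 0 < b) :
    ∃ C, IsShiftDominated (fun x : V => rexp (-(b * ‖x‖ ^ 2)))
        (fun x => C * rexp (-(b / 4 * ‖x‖ ^ 2))) ∧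
      IsShiftDominated (gaussianFDeriv (V := V) b) (fun x => C * rexp (-(b / 4 * ‖x‖ ^ 2))) ∧
      IsShiftDominated (gaussianHessian (V := V) b) (fun x => C * rexp (-(b / 4 * ‖x‖ ^ 2))) := by
  set A := 1 + 2 * b + 4 * b ^ 2
  have hA : 0 ≤ A := by positivity
  have hpoly : ∀ (z : V) (P : ℝ), P ≤ A * (1 + ‖z‖ + ‖z‖ ^ 2) →
      P * rexp (-(b * ‖z‖ ^ 2)) ≤ A * ((1 + ‖z‖ + ‖z‖ ^ 2) * rexp (-(b * ‖z‖ ^ 2))) :=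
    fun z P hP => by rw [← mul_assoc]; exact mul_le_mul_of_nonneg_right hP (Real.exp_pos _).le
  refine ⟨_, isShiftDominated_of_norm_le hb hA fun z => ?_,
    isShiftDominated_of_norm_le hb hA fun z => ?_,
    isShiftDominated_of_norm_le (G := gaussianHessian b) hb hA fun z => ?_⟩
  all_goals have hz := norm_nonneg z
  · rw [Real.norm_of_nonneg (Real.exp_pos _).le]
    simpa only [one_mul] using hpoly z 1 (by nlinarith [mul_nonneg hb.le hz, sq_nonneg b])
  · rw [norm_gaussianFDeriv hb.le]
    exact hpoly z _ (by
      nlinarith [mul_nonneg hb.le hz, sq_nonneg b, mul_nonneg hb.le (sq_nonneg ‖z‖)])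
  · exact (norm_gaussianHessian_le hb.le z).trans (hpoly z _ (by
      nlinarith [mul_nonneg hb.le hz, sq_nonneg b, mul_nonneg hb.le (sq_nonneg ‖z‖),
        mul_nonneg (sq_nonneg b) hz]))

lemma integrable_exp_neg_mul_norm_sq [FiniteDimensional ℝ V] [MeasurableSpace V] [BorelSpace V]
    (hb : 0 < b) : Integrable fun x : V => rexp (-(b * ‖x‖ ^ 2)) := by
  have h := (GaussianFourier.integrable_cexp_neg_mul_sq_norm_add (V := V) (b := (b : ℂ))
    (by simpa using hb) 0 0).norm
  refine h.congr (ae_of_all _ fun x => ?_)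
  beta_reduce
  rw [zero_mul, add_zero, Complex.norm_exp]
  norm_cast
  simp

end Gaussian

lemma integral_comp_add_smul {V F : Type*} [NormedAddCommGroup V] [NormedSpace ℝ V]
    [MeasurableSpace V] [BorelSpace V] [FiniteDimensional ℝ V] (ν : Measure V)
    [ν.IsAddHaarMeasure] [NormedAddCommGroup F] [NormedSpace ℝ F] (f : V → F) (μ : V) (σ : ℝ) :
    ∫ x, f (μ + σ • x) ∂ν = |(σ ^ Module.finrank ℝ V)⁻¹| • ∫ w, f w ∂ν := by
  rw [Measure.integral_comp_smul ν (fun y => f (μ + y)), integral_add_left_eq_self]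

lemma integral_mul_gaussianHessian_apply {V : Type*} [NormedAddCommGroup V]
    [InnerProductSpace ℝ V] [FiniteDimensional ℝ V] [MeasurableSpace V] [BorelSpace V]
    (ν : Measure V) [ν.IsAddHaarMeasure] {σ : ℝ} (hσ : 0 < σ) (a : V → ℝ) (μ u v : V) :
    ∫ w, a w * gaussianHessian (2 * σ ^ 2)⁻¹ (μ - w) u v ∂ν =
      σ ^ Module.finrank ℝ V * ∫ x, a (μ + σ • x) *
        (rexp (-‖x‖ ^ 2 / 2) * ((σ ^ 2)⁻¹ * (⟪u, x⟫ * ⟪x, v⟫ - ⟪u, v⟫))) ∂ν := by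
  have hchange := integral_comp_add_smul ν
    (fun w => a w * gaussianHessian (2 * σ ^ 2)⁻¹ (μ - w) u v) μ σ
  rw [abs_of_pos (by positivity), smul_eq_mul, eq_inv_mul_iff_mul_eq₀ (by positivity)] at hchange
  rw [← hchange]
  congr 2 with x
  rw [sub_add_cancel_left, gaussianHessian_neg, gaussianHessian_smul_apply hσ.ne']

lemma gaussSmooth_eq_integral_smul (d : ℕ) (σ : ℝ) (k : EuclideanSpace ℝ (Fin d) → ℝ) :
    gaussSmooth d σ k = fun μ => ∫ w, ((2 * π * σ ^ 2) ^ (-(d : ℝ) / 2) * k w) •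
      rexp (-((2 * σ ^ 2)⁻¹ * ‖μ - w‖ ^ 2)) := by
  ext μ
  refine integral_congr_ae (ae_of_all _ fun w => ?_)
  simp only [smul_eq_mul, norm_sub_rev μ w]
  ring_nf

lemma pow_mul_two_pi_mul_sq_rpow {σ : ℝ} (hσ : 0 < σ) (d : ℕ) :
    σ ^ d * (2 * π * σ ^ 2) ^ (-(d : ℝ) / 2) = (2 * π) ^ (-(d : ℝ) / 2) := by
  have hσd : (σ ^ 2) ^ (-(d : ℝ) / 2) = (σ ^ d)⁻¹ := by
    rw [← Real.rpow_natCast σ 2, ← Real.rpow_mul hσ.le, ← Real.rpow_natCast,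
      ← Real.rpow_neg hσ.le]
    congr 1
    push_cast
    ring
  rw [Real.mul_rpow (by positivity) (by positivity), hσd]
  field_simp

/-- The Hessian is expressed through its bilinear form, using
`uᵀ(wwᵀ − I)v = ⟪u,w⟫⟪w,v⟫ − ⟪u,v⟫`. -/
theorem stmt_10_general (d : ℕ) (σ M : ℝ) (hσ : 0 < σ)
    (k : EuclideanSpace ℝ (Fin d) → ℝ) (hmeas : Measurable k)
    (hk0 : ∀ w, 0 ≤ k w) (hkM : ∀ w, k w ≤ M)
    (g : EuclideanSpace ℝ (Fin d) → ℝ) (hg : g = gaussSmooth d σ k) :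
    ContDiff ℝ 2 g ∧ ∀ (μ u v : EuclideanSpace ℝ (Fin d)),
      iteratedFDeriv ℝ 2 g μ ![u, v] =
        ∫ w : EuclideanSpace ℝ (Fin d),
          (2 * π) ^ (-(d : ℝ) / 2) * Real.exp (-‖w‖ ^ 2 / 2) *
            ((σ ^ 2)⁻¹ * (⟪u, w⟫ * ⟪w, v⟫ - ⟪u, v⟫)) * k (μ + σ • w) := by
  rw [hg, gaussSmooth_eq_integral_smul]
  set b : ℝ := (2 * σ ^ 2)⁻¹
  set c : ℝ := (2 * π * σ ^ 2) ^ (-(d : ℝ) / 2)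
  have hb : 0 < b := by positivity
  have hck : ∀ w, ‖c * k w‖ ≤ c * M := fun w => by
    rw [Real.norm_of_nonneg (by have := hk0 w; positivity)]
    exact mul_le_mul_of_nonneg_left (hkM w) (by positivity)
  obtain ⟨C, hφ, hφ', hφ''⟩ := isShiftDominated_gaussian (V := EuclideanSpace ℝ (Fin d)) hb
  obtain ⟨hsmooth, hhess⟩ := contDiff_two_integral_smul_comp_sub
    (hmeas.const_mul c).aestronglyMeasurable hck (hasFDerivAt_exp_neg_mul_norm_sq b)
    (hasFDerivAt_gaussianFDeriv b) (continuous_gaussianHessian b)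
    ((integrable_exp_neg_mul_norm_sq (by positivity)).const_mul C) hφ hφ' hφ''
  refine ⟨hsmooth, fun μ u v => ?_⟩
  rw [hhess]
  simp only [smul_eq_mul]
  rw [integral_mul_gaussianHessian_apply volume hσ, finrank_euclideanSpace_fin,
    ← pow_mul_two_pi_mul_sq_rpow hσ d, ← integral_const_mul]
  congr 1 with x
  ring

/-- The Hessian of the Gaussian smoothing admits the log-derivative representation
`∇²g(μ) = ∫ (2π)^(−d/2) exp(−‖w‖²/2) σ⁻²(wwᵀ − I) k(μ + σw) dw`, expressed here via its
bilinear form, using `uᵀ(wwᵀ − I)v = ⟪u,w⟫⟪w,v⟫ − ⟪u,v⟫`. -/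
theorem stmt_10 (d : ℕ) (hd : 1 ≤ d) (σ M : ℝ) (hσ : 0 < σ) (hM : 0 < M)
    (k : EuclideanSpace ℝ (Fin d) → ℝ) (hmeas : Measurable k)
    (hk0 : ∀ w, 0 ≤ k w) (hkM : ∀ w, k w ≤ M)
    (g : EuclideanSpace ℝ (Fin d) → ℝ) (hg : g = gaussSmooth d σ k) :
    ContDiff ℝ 2 g ∧ ∀ (μ u v : EuclideanSpace ℝ (Fin d)),
      iteratedFDeriv ℝ 2 g μ ![u, v] =
        ∫ w : EuclideanSpace ℝ (Fin d),
          (2 * π) ^ (-(d : ℝ) / 2) * Real.exp (-‖w‖ ^ 2 / 2) *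
            ((σ ^ 2)⁻¹ * (⟪u, w⟫ * ⟪w, v⟫ - ⟪u, v⟫)) * k (μ + σ • w) :=
  stmt_10_general d σ M hσ k hmeas hk0 hkM g hg
end

section
/- Fix an integer K ≥ 1, a score function h : {1,…,K} → ℝ, a function f : {1,…,K} → ℝ, and let c be the Euler–Mascheroni constant. For each j let g_j(t) = exp(−((t + c − h(j)) + exp(−(t + c − h(j))))) be the Gumbel density with location h(j), and for each z let A_z = {t ∈ ℝ^K : t_z > t_j for all j ≠ z} be the event that coordinate z is the strict argmax. Then ∫_{ℝ^K} (∏_{j=1}^{K} g_j(t_j)) · (∑_{z=1}^{K} 1_{A_z}(t) · f(z)) dt = ∑_{z=1}^{K} (exp(h(z)) / ∑_{j=1}^{K} exp(h(j))) · f(z). That is, the expectation of f evaluated at the argmax of K independent Gumbel random variables with locations h(1),…,h(K) equals the expectation of f under the softmax distribution induced by h. -/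
/-!
Splitting the integral along the events `A_z`, it suffices to compute `∫_{A_z} ∏ g_j(t_j) dt`.
Integrating out the coordinates `t_j`, `j ≠ z`, first (Fubini) turns it into
`∫ g_z(x) ∏_{j ≠ z} F_j(x) dx`, where `F_a(x) = exp (-e^a e^{-(x + γ)})` is the Gumbel CDF.
These CDFs multiply by adding the weights `e^a`, and `g_a(x) = e^a e^{-(x + γ)} F_a(x)`, so the
integrand is `e^{h z} / S` times the Gumbel density with location `log S`, `S = ∑_j e^{h j}`.
-/

open MeasureTheory Real Finset

/-- Gumbel PDF with location `a`, shifted by the Euler–Mascheroni constant so its mean is `a`. -/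
noncomputable def gumbelPdf (a t : ℝ) : ℝ :=
  Real.exp (-((t + Real.eulerMascheroniConstant - a) +
    Real.exp (-(t + Real.eulerMascheroniConstant - a))))

open Filter Topology Set

theorem integrable_of_hasDerivAt_of_nonneg {g g' : ℝ → ℝ} {m l : ℝ}
    (hderiv : ∀ x, HasDerivAt g (g' x) x) (hg' : ∀ x, 0 ≤ g' x)
    (hbot : Tendsto g atBot (𝓝 m)) (htop : Tendsto g atTop (𝓝 l)) : Integrable g' := by
  have hIoi : IntegrableOn g' (Ioi 0) :=
    integrableOn_Ioi_deriv_of_nonneg' (fun x _ => hderiv x) (fun x _ => hg' x) htop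
  have hIio : IntegrableOn g' (Iio 0) := by
    have hrefl : IntegrableOn (fun x => g' (-x)) (Ioi (-0)) := by
      rw [neg_zero]
      refine integrableOn_Ioi_deriv_of_nonneg' (g := fun x => -g (-x))
        (fun x _ => ((hderiv (-x)).comp x (hasDerivAt_neg x)).neg.congr_deriv (by ring))
        (fun x _ => hg' _) (hbot.comp tendsto_neg_atTop_atBot).neg
    simpa using hrefl.comp_neg_Iio
  rw [← integrableOn_univ, ← Iic_union_Ioi (a := (0 : ℝ))]
  exact ((integrableOn_Iic_iff_integrableOn_Iio).2 hIio).union hIoi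

theorem integral_mul_sum_indicator_const {α ι : Type*} [MeasurableSpace α] {μ : Measure α}
    {p : α → ℝ} (hp : Integrable p μ) {S : ι → Set α} (hS : ∀ z, MeasurableSet (S z))
    (s : Finset ι) (f : ι → ℝ) :
    ∫ t, p t * ∑ z ∈ s, (S z).indicator (fun _ => f z) t ∂μ =
      ∑ z ∈ s, (∫ t in S z, p t ∂μ) * f z := by
  have hsplit : ∀ t, p t * ∑ z ∈ s, (S z).indicator (fun _ => f z) t =
      ∑ z ∈ s, (S z).indicator p t * f z := fun t => by
    simp only [mul_sum, ← indicator_mul_right, indicator_mul_left]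
  simp_rw [hsplit]
  rw [integral_finsetSum _ fun z _ => (hp.indicator (hS z)).mul_const _]
  simp_rw [integral_mul_const, integral_indicator (hS _)]

noncomputable def gumbelCdf (a t : ℝ) : ℝ :=
  exp (-exp (-(t + eulerMascheroniConstant - a)))

theorem gumbelPdf_eq_exp_mul_gumbelCdf (a t : ℝ) :
    gumbelPdf a t = exp (-(t + eulerMascheroniConstant - a)) * gumbelCdf a t := by
  rw [gumbelPdf, gumbelCdf, ← exp_add, neg_add]

theorem gumbelPdf_nonneg (a t : ℝ) : 0 ≤ gumbelPdf a t := (exp_pos _).le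

theorem hasDerivAt_gumbelCdf (a t : ℝ) : HasDerivAt (gumbelCdf a) (gumbelPdf a t) t := by
  have hinner : HasDerivAt (fun t => -(t + eulerMascheroniConstant - a)) (-1) t :=
    (((hasDerivAt_id' t).add_const _).sub_const a).neg
  refine hinner.exp.neg.exp.congr_deriv ?_
  rw [gumbelPdf_eq_exp_mul_gumbelCdf, gumbelCdf, Pi.neg_apply]
  ring

theorem tendsto_gumbelCdf_atBot (a : ℝ) : Tendsto (gumbelCdf a) atBot (𝓝 0) := by
  have hinner : Tendsto (fun t => -(t + eulerMascheroniConstant - a)) atBot atTop :=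
    tendsto_neg_atBot_atTop.comp (tendsto_atBot_add_const_right _ _
      (tendsto_atBot_add_const_right _ _ tendsto_id))
  exact tendsto_exp_atBot.comp (tendsto_neg_atTop_atBot.comp (tendsto_exp_atTop.comp hinner))

theorem tendsto_gumbelCdf_atTop (a : ℝ) : Tendsto (gumbelCdf a) atTop (𝓝 1) := by
  have hinner : Tendsto (fun t => -(t + eulerMascheroniConstant - a)) atTop atBot :=
    tendsto_neg_atTop_atBot.comp (tendsto_atTop_add_const_right _ _
      (tendsto_atTop_add_const_right _ _ tendsto_id))
  have h := (continuous_exp.tendsto _).comp (tendsto_exp_atBot.comp hinner).neg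
  rwa [neg_zero, exp_zero] at h

theorem integrable_gumbelPdf (a : ℝ) : Integrable (gumbelPdf a) :=
  integrable_of_hasDerivAt_of_nonneg (hasDerivAt_gumbelCdf a) (gumbelPdf_nonneg a)
    (tendsto_gumbelCdf_atBot a) (tendsto_gumbelCdf_atTop a)

theorem integral_gumbelPdf (a : ℝ) : ∫ t, gumbelPdf a t = 1 := by
  rw [integral_of_hasDerivAt_of_tendsto (hasDerivAt_gumbelCdf a) (integrable_gumbelPdf a)
    (tendsto_gumbelCdf_atBot a) (tendsto_gumbelCdf_atTop a), sub_zero]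

theorem setIntegral_Iio_gumbelPdf (a x : ℝ) : ∫ t in Iio x, gumbelPdf a t = gumbelCdf a x := by
  rw [← integral_Iic_eq_integral_Iio, integral_Iic_of_hasDerivAt_of_tendsto'
    (fun t _ => hasDerivAt_gumbelCdf a t) (integrable_gumbelPdf a).integrableOn
    (tendsto_gumbelCdf_atBot a), sub_zero]

theorem gumbelPdf_mul_prod_gumbelCdf {ι : Type*} (s : Finset ι) (a : ℝ) (b : ι → ℝ) (t : ℝ) :
    gumbelPdf a t * ∏ j ∈ s, gumbelCdf (b j) t =
      exp a / (exp a + ∑ j ∈ s, exp (b j)) *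
        gumbelPdf (log (exp a + ∑ j ∈ s, exp (b j))) t := by
  set S := exp a + ∑ j ∈ s, exp (b j) with hS_def
  have hS : 0 < S := by positivity
  set w := exp (-(t + eulerMascheroniConstant))
  have hshift : ∀ c, exp (-(t + eulerMascheroniConstant - c)) = exp c * w := fun c => by
    rw [← exp_add]; ring_nf
  simp only [gumbelPdf_eq_exp_mul_gumbelCdf, gumbelCdf, hshift, exp_log hS]
  have hcdf : exp (-(exp a * w)) * ∏ j ∈ s, exp (-(exp (b j) * w)) = exp (-(S * w)) := by
    rw [← exp_sum, ← exp_add, sum_neg_distrib, ← sum_mul, hS_def]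
    ring_nf
  rw [mul_assoc, hcdf]
  field_simp

theorem integral_gumbelPdf_mul_prod_gumbelCdf {ι : Type*} (s : Finset ι) (a : ℝ) (b : ι → ℝ) :
    ∫ t, gumbelPdf a t * ∏ j ∈ s, gumbelCdf (b j) t = exp a / (exp a + ∑ j ∈ s, exp (b j)) := by
  simp_rw [gumbelPdf_mul_prod_gumbelCdf, integral_const_mul, integral_gumbelPdf, mul_one]

def strictArgmaxSet {ι : Type*} (z : ι) : Set (ι → ℝ) := {t | ∀ j, j ≠ z → t j < t z}

theorem measurableSet_strictArgmaxSet {ι : Type*} [Countable ι] (z : ι) :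
    MeasurableSet (strictArgmaxSet z) := by
  simp only [strictArgmaxSet, ofPred_forall]
  exact .iInter fun j => .iInter fun _ =>
    measurableSet_lt (measurable_pi_apply j) (measurable_pi_apply z)

theorem insertNth_mem_strictArgmaxSet {n : ℕ} (z : Fin (n + 1)) (x : ℝ) (y : Fin n → ℝ) :
    z.insertNth x y ∈ strictArgmaxSet z ↔ ∀ j, y j < x := by
  simp [strictArgmaxSet, Fin.forall_iff_succAbove z, Fin.succAbove_ne]

theorem indicator_strictArgmaxSet_insertNth {n : ℕ} (p : Fin (n + 1) → ℝ → ℝ) (z : Fin (n + 1))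
    (x : ℝ) (y : Fin n → ℝ) :
    (strictArgmaxSet z).indicator (fun t => ∏ j, p j (t j)) (z.insertNth x y) =
      p z x * ∏ j, (Iio x).indicator (p (z.succAbove j)) (y j) := by
  by_cases hy : ∀ j, y j < x
  · rw [indicator_of_mem ((insertNth_mem_strictArgmaxSet z x y).2 hy), Fin.prod_univ_succAbove _ z]
    simp [indicator_of_mem, hy]
  · rw [indicator_of_notMem (mt (insertNth_mem_strictArgmaxSet z x y).1 hy)]
    obtain ⟨j, hj⟩ := not_forall.1 hy
    rw [prod_eq_zero (mem_univ j) (indicator_of_notMem (s := Iio x) hj _), mul_zero]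

theorem setIntegral_strictArgmaxSet_prod {n : ℕ} {p : Fin (n + 1) → ℝ → ℝ}
    (hp : ∀ j, Integrable (p j)) (z : Fin (n + 1)) :
    ∫ t in strictArgmaxSet z, ∏ j, p j (t j) =
      ∫ x, p z x * ∏ j : Fin n, ∫ u in Iio x, p (z.succAbove j) u := by
  have hS := measurableSet_strictArgmaxSet (ι := Fin (n + 1)) z
  have mp := (measurePreserving_piFinSuccAbove (fun _ : Fin (n + 1) => (volume : Measure ℝ)) z).symm
  have hint : Integrable (fun q => (strictArgmaxSet z).indicator (fun t => ∏ j, p j (t j))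
      ((MeasurableEquiv.piFinSuccAbove (fun _ => ℝ) z).symm q))
      (volume.prod (Measure.pi fun _ => volume)) :=
    (mp.integrable_comp_emb (MeasurableEquiv.measurableEmbedding _)).2
      ((Integrable.fintype_prod hp).indicator hS)
  rw [← integral_indicator hS, volume_pi, ← mp.integral_comp', integral_prod _ hint]
  congr 1 with x
  simp only [MeasurableEquiv.piFinSuccAbove_symm_apply, Fin.insertNthEquiv, Equiv.coe_fn_mk,
    indicator_strictArgmaxSet_insertNth, integral_const_mul, integral_fintype_prod_eq_prod,
    integral_indicator measurableSet_Iio]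

theorem setIntegral_strictArgmaxSet_gumbelPdf {K : ℕ} (h : Fin K → ℝ) (z : Fin K) :
    ∫ t in strictArgmaxSet z, ∏ j, gumbelPdf (h j) (t j) = exp (h z) / ∑ j, exp (h j) := by
  cases K with
  | zero => exact z.elim0
  | succ n =>
    rw [setIntegral_strictArgmaxSet_prod (fun j => integrable_gumbelPdf (h j)) z,
      Fin.sum_univ_succAbove _ z]
    simp_rw [setIntegral_Iio_gumbelPdf, integral_gumbelPdf_mul_prod_gumbelCdf]

theorem stmt_15_general (K : ℕ) (h f : Fin K → ℝ) :
    (∫ t : Fin K → ℝ,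
        (∏ j, gumbelPdf (h j) (t j)) *
          ∑ z, Set.indicator {t : Fin K → ℝ | ∀ j, j ≠ z → t j < t z} (fun _ => f z) t) =
      ∑ z, (Real.exp (h z) / ∑ j, Real.exp (h j)) * f z := by
  refine (integral_mul_sum_indicator_const (μ := volume)
    (Integrable.fintype_prod fun j => integrable_gumbelPdf (h j))
    measurableSet_strictArgmaxSet univ f).trans ?_
  simp_rw [setIntegral_strictArgmaxSet_gumbelPdf]

/-- The expectation of `f` at the argmax of `K` independent Gumbel random variables with
locations `h 1, …, h K` equals the expectation of `f` under the softmax distribution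
induced by `h`. -/
theorem stmt_15 (K : ℕ) (hK : 1 ≤ K) (h f : Fin K → ℝ) :
    (∫ t : Fin K → ℝ,
        (∏ j, gumbelPdf (h j) (t j)) *
          ∑ z, Set.indicator {t : Fin K → ℝ | ∀ j, j ≠ z → t j < t z} (fun _ => f z) t) =
      ∑ z, (Real.exp (h z) / ∑ j, Real.exp (h j)) * f z :=
  stmt_15_general K h f
end
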